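/- Let n ≥ 1 and R > 0. Then ∫_{B(0,R) ⊂ ℝ^{2n}} |∇u_R(z) + z⊥/2| dz = (π^{n+1/2}·Γ(n + 1/2) / (2·Γ(n)·Γ(n+1))) · R^{2n+1}. Equivalently, with Q = 2n+2, this equals (π^{(Q−1)/2}·Γ((Q−1)/2) / (2·Γ((Q−2)/2)·Γ(Q/2))) · R^{Q−1}. (Here |∇u_R(z) + z⊥/2| = √(|∇u_R(z)|² + |z|²/4 + ⟨∇u_R(z), z⊥⟩) since ⟨z, z⊥⟩ = 0 and |z⊥| = |z|.) -/

import Mathlib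

/-!
Off the origin `u_R` is radial with `∇u_R(z) = -|z| z / (2√(R² - |z|²))`, and `z⊥` is orthogonal
to `z` with `|z⊥| = |z|`, so the integrand is the radial function `R|z| / (2√(R² - |z|²))`.
Polar coordinates turn the integral into `2n |B₁| (R/2) ∫₀^R r^{2n} / √(R² - r²) dr`, the
substitution `r = R sin θ` makes this `R^{2n}` times the Wallis integral `∫₀^{π/2} sin^{2n} θ dθ`,
and `∫₀^{π/2} sin^{2n} = √π Γ(n + 1/2) / (2 Γ(n + 1))`.
-/

open Metric MeasureTheory Real

/-- The map `z = (x, y) ↦ z⊥ = (y, -x)` on `ℝ^{2n}`. -/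
noncomputable def zperp (n : ℕ) (z : EuclideanSpace ℝ (Fin (2 * n))) :
    EuclideanSpace ℝ (Fin (2 * n)) := WithLp.toLp 2 fun (i : Fin (2 * n)) =>
  if h : (i : ℕ) < n then z ⟨(i : ℕ) + n, by have := i.isLt; omega⟩
  else -z ⟨(i : ℕ) - n, by have := i.isLt; omega⟩

/-- The candidate isoperimetric profile `u_R` on `ℝ^{2n}`. -/
noncomputable def uR (n : ℕ) (R : ℝ) (z : EuclideanSpace ℝ (Fin (2 * n))) : ℝ :=
  if ‖z‖ ≤ R then
    π * R ^ 2 / 8 + ‖z‖ / 4 * Real.sqrt (R ^ 2 - ‖z‖ ^ 2) - R ^ 2 / 4 * Real.arcsin (‖z‖ / R)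
  else 0

/-- The class `D(R)`: continuous nonnegative functions on the closed ball, vanishing on the
sphere, `C²` inside, `W^{1,1}` inside, whose support is not contained in any smaller ball. -/
def memD (n : ℕ) (R : ℝ) (u : EuclideanSpace ℝ (Fin (2 * n)) → ℝ) : Prop :=
  ContinuousOn u (closedBall 0 R) ∧
  (∀ z ∈ closedBall (0 : EuclideanSpace ℝ (Fin (2 * n))) R, 0 ≤ u z) ∧
  (∀ z ∈ sphere (0 : EuclideanSpace ℝ (Fin (2 * n))) R, u z = 0) ∧
  ContDiffOn ℝ 2 u (ball 0 R) ∧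
  IntegrableOn u (ball 0 R) ∧
  IntegrableOn (fun z => gradient u z) (ball 0 R) ∧
  (∀ r : ℝ, r < R → ¬ (Function.support u ∩ closedBall 0 R ⊆ ball 0 r))

/-- Half the volume: `∫_{B(0,R)} u`. -/
noncomputable def hVol (n : ℕ) (R : ℝ) (u : EuclideanSpace ℝ (Fin (2 * n)) → ℝ) : ℝ :=
  ∫ z in ball (0 : EuclideanSpace ℝ (Fin (2 * n))) R, u z

/-- The H-perimeter functional: `∫_{B(0,R)} |∇u(z) + z⊥/2| dz`. -/
noncomputable def hPer (n : ℕ) (R : ℝ) (u : EuclideanSpace ℝ (Fin (2 * n)) → ℝ) : ℝ :=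
  ∫ z in ball (0 : EuclideanSpace ℝ (Fin (2 * n))) R,
    ‖gradient u z + (1 / 2 : ℝ) • zperp n z‖

open Topology

def swapHalves (n : ℕ) (i : Fin (2 * n)) : Fin (2 * n) :=
  if h : (i : ℕ) < n then ⟨i + n, by omega⟩ else ⟨i - n, by have := i.isLt; omega⟩

lemma swapHalves_lt_iff (n : ℕ) (i : Fin (2 * n)) :
    (swapHalves n i : ℕ) < n ↔ ¬ (i : ℕ) < n := by
  unfold swapHalves; split_ifs <;> simp <;> omega

lemma swapHalves_involutive (n : ℕ) : Function.Involutive (swapHalves n) := fun i => by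
  have := i.isLt
  by_cases h : (i : ℕ) < n
  · ext; simp [swapHalves, h]
  · ext; simp [swapHalves, h, show (i : ℕ) - n < n by omega]; omega

lemma zperp_apply (n : ℕ) (z : EuclideanSpace ℝ (Fin (2 * n))) (i : Fin (2 * n)) :
    zperp n z i = if (i : ℕ) < n then z (swapHalves n i) else -z (swapHalves n i) := by
  by_cases h : (i : ℕ) < n <;> simp [zperp, swapHalves, h]

lemma norm_zperp (n : ℕ) (z : EuclideanSpace ℝ (Fin (2 * n))) : ‖zperp n z‖ = ‖z‖ := by
  simp only [EuclideanSpace.norm_eq]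
  rw [← Equiv.sum_comp (swapHalves_involutive n).toPerm]
  congr 1
  refine Finset.sum_congr rfl fun i _ => ?_
  simp only [Function.Involutive.coe_toPerm, zperp_apply, swapHalves_involutive n i]
  split_ifs <;> simp

lemma inner_zperp_eq_zero (n : ℕ) (z : EuclideanSpace ℝ (Fin (2 * n))) :
    inner ℝ z (zperp n z) = 0 := by
  set σ := (swapHalves_involutive n).toPerm
  have hanti : ∀ i, zperp n z (σ i) * z (σ i) = -(zperp n z i * z i) := fun i => by
    simp only [σ, Function.Involutive.coe_toPerm, zperp_apply, swapHalves_involutive n i,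
      swapHalves_lt_iff]
    split_ifs <;> ring
  have hsum := Equiv.sum_comp σ fun i => zperp n z i * z i
  simp only [hanti, Finset.sum_neg_distrib, neg_eq_iff_add_eq_zero, ← two_mul] at hsum
  simpa [PiLp.inner_apply] using hsum

section Radial

variable {E : Type*} [NormedAddCommGroup E] [InnerProductSpace ℝ E]

lemma hasFDerivAt_norm {z : E} (hz : z ≠ 0) :
    HasFDerivAt (fun w : E => ‖w‖) (‖z‖⁻¹ • innerSL ℝ z) z := by
  have hsq := ((hasStrictFDerivAt_norm_sq z).hasFDerivAt).sqrt (by positivity)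
  simp only [sqrt_sq (norm_nonneg _)] at hsq
  convert hsq using 1
  ext w
  simp only [smul_apply, innerSL_apply_apply, smul_eq_mul, nsmul_eq_mul]
  field_simp
  ring

lemma HasDerivAt.hasGradientAt_comp_norm [CompleteSpace E] {f : ℝ → ℝ} {f' : ℝ} {z : E}
    (hz : z ≠ 0) (hf : HasDerivAt f f' ‖z‖) :
    HasGradientAt (fun w => f ‖w‖) ((f' / ‖z‖) • z) z := by
  have hdual : InnerProductSpace.toDual ℝ E ((f' / ‖z‖) • z) = f' • ‖z‖⁻¹ • innerSL ℝ z := by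
    ext w
    simp only [map_smul, smul_apply, innerSL_apply_apply, InnerProductSpace.toDual_apply_apply,
      smul_eq_mul]
    ring
  rw [hasGradientAt_iff_hasFDerivAt, hdual]
  exact hf.comp_hasFDerivAt z (hasFDerivAt_norm hz)

end Radial

noncomputable def uRProfile (R r : ℝ) : ℝ :=
  π * R ^ 2 / 8 + r / 4 * √(R ^ 2 - r ^ 2) - R ^ 2 / 4 * arcsin (r / R)

lemma hasDerivAt_uRProfile {R r : ℝ} (hr : |r| < R) :
    HasDerivAt (uRProfile R) (-(r ^ 2 / (2 * √(R ^ 2 - r ^ 2)))) r := by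
  have hR : 0 < R := (abs_nonneg r).trans_lt hr
  have hpos : 0 < R ^ 2 - r ^ 2 := by nlinarith [sq_abs r, abs_nonneg r]
  have hs : 0 < √(R ^ 2 - r ^ 2) := sqrt_pos.mpr hpos
  have hs2 : √(R ^ 2 - r ^ 2) ^ 2 = R ^ 2 - r ^ 2 := sq_sqrt hpos.le
  have hrR : |r / R| < 1 := by rwa [abs_div, abs_of_pos hR, div_lt_one hR]
  have harcsin : √(1 - (r / R) ^ 2) = √(R ^ 2 - r ^ 2) / R := by
    rw [show 1 - (r / R) ^ 2 = (R ^ 2 - r ^ 2) / R ^ 2 by field_simp, sqrt_div' _ (sq_nonneg R),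
      sqrt_sq hR.le]
  have hsqrt := ((hasDerivAt_pow 2 r).const_sub (R ^ 2)).sqrt hpos.ne'
  have hasin := (hasDerivAt_arcsin (abs_lt.mp hrR).1.ne' (abs_lt.mp hrR).2.ne).comp r
    ((hasDerivAt_id r).div_const R)
  have h := ((hasDerivAt_const r (π * R ^ 2 / 8)).add
    (((hasDerivAt_id r).div_const 4).mul hsqrt)).sub (hasin.const_mul (R ^ 2 / 4))
  refine h.congr_deriv ?_
  rw [harcsin, id]
  norm_num
  field_simp
  linear_combination 2 * hs2

lemma norm_smul_add_smul_of_inner_eq_zero {E : Type*} [NormedAddCommGroup E]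
    [InnerProductSpace ℝ E] {x y : E} (h : inner ℝ x y = 0) (hxy : ‖x‖ = ‖y‖) (a b : ℝ) :
    ‖a • x + b • y‖ = √(a ^ 2 + b ^ 2) * ‖x‖ := by
  rw [← sqrt_sq (norm_nonneg (a • x + b • y)), ← sqrt_sq (norm_nonneg x),
    ← sqrt_mul (by positivity), norm_add_sq_real, real_inner_smul_left, real_inner_smul_right, h,
    norm_smul, norm_smul, ← hxy]
  congr 1
  simp only [Real.norm_eq_abs, mul_pow, sq_abs]
  ring

lemma uR_eventuallyEq_uRProfile (n : ℕ) {R : ℝ} {z : EuclideanSpace ℝ (Fin (2 * n))}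
    (hz : ‖z‖ < R) : uR n R =ᶠ[𝓝 z] fun w => uRProfile R ‖w‖ := by
  filter_upwards [(isOpen_lt continuous_norm continuous_const).mem_nhds hz] with w hw
  exact if_pos (le_of_lt hw)

lemma hasGradientAt_uR (n : ℕ) {R : ℝ} {z : EuclideanSpace ℝ (Fin (2 * n))} (hz0 : z ≠ 0)
    (hzR : ‖z‖ < R) :
    HasGradientAt (uR n R) (-(‖z‖ / (2 * √(R ^ 2 - ‖z‖ ^ 2))) • z) z := by
  have h := (hasDerivAt_uRProfile (by rwa [abs_norm])).hasGradientAt_comp_norm hz0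
  convert h.congr_of_eventuallyEq (uR_eventuallyEq_uRProfile n hzR) using 2
  field_simp [norm_ne_zero_iff.mpr hz0]

lemma norm_gradient_uR_add_half_zperp (n : ℕ) {R : ℝ} {z : EuclideanSpace ℝ (Fin (2 * n))}
    (hz0 : z ≠ 0) (hzR : ‖z‖ < R) :
    ‖gradient (uR n R) z + (1 / 2 : ℝ) • zperp n z‖ = R * ‖z‖ / (2 * √(R ^ 2 - ‖z‖ ^ 2)) := by
  have hpos : 0 < R ^ 2 - ‖z‖ ^ 2 := by nlinarith [norm_nonneg z]
  have hs : 0 < √(R ^ 2 - ‖z‖ ^ 2) := sqrt_pos.mpr hpos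
  have hs2 : √(R ^ 2 - ‖z‖ ^ 2) ^ 2 = R ^ 2 - ‖z‖ ^ 2 := sq_sqrt hpos.le
  have hR : 0 < R := (norm_nonneg z).trans_lt hzR
  rw [(hasGradientAt_uR n hz0 hzR).gradient,
    norm_smul_add_smul_of_inner_eq_zero (inner_zperp_eq_zero n z) (norm_zperp n z).symm,
    show (-(‖z‖ / (2 * √(R ^ 2 - ‖z‖ ^ 2)))) ^ 2 + (1 / 2) ^ 2 =
        (R / (2 * √(R ^ 2 - ‖z‖ ^ 2))) ^ 2 by
      field_simp; linear_combination hs2,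
    sqrt_sq (by positivity)]
  ring

lemma integral_ball_fun_norm_addHaar {E F : Type*} [NormedAddCommGroup E] [NormedSpace ℝ E]
    [Nontrivial E] [FiniteDimensional ℝ E] [MeasurableSpace E] [BorelSpace E]
    [NormedAddCommGroup F] [NormedSpace ℝ F] (μ : Measure E) [μ.IsAddHaarMeasure]
    (f : ℝ → F) (R : ℝ) :
    ∫ x in ball 0 R, f ‖x‖ ∂μ = Module.finrank ℝ E • μ.real (ball 0 1) •
      ∫ y in Set.Ioo 0 R, y ^ (Module.finrank ℝ E - 1) • f y := by
  have hball : (ball (0 : E) R).indicator (fun x => f ‖x‖) =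
      fun x => (Set.Iio R).indicator f ‖x‖ := by
    ext x
    simp [Set.indicator]
  rw [← integral_indicator measurableSet_ball, hball, integral_fun_norm_addHaar μ,
    ← Set.Ioi_inter_Iio, ← setIntegral_indicator measurableSet_Iio]
  simp_rw [Set.indicator_smul_apply]

lemma image_mul_sin_Ioo {R : ℝ} (hR : 0 < R) :
    (fun θ => R * sin θ) '' Set.Ioo 0 (π / 2) = Set.Ioo 0 R := by
  have hmono : StrictMonoOn (fun θ => R * sin θ) (Set.Icc 0 (π / 2)) := fun a ha b hb hab =>
    mul_lt_mul_of_pos_left (strictMonoOn_sin ⟨by linarith [pi_pos, ha.1], ha.2⟩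
      ⟨by linarith [pi_pos, hb.1], hb.2⟩ hab) hR
  have h0 : (0 : ℝ) ∈ Set.Icc 0 (π / 2) := Set.left_mem_Icc.mpr (by positivity)
  have h1 : π / 2 ∈ Set.Icc 0 (π / 2) := Set.right_mem_Icc.mpr (by positivity)
  apply Set.Subset.antisymm
  · rintro _ ⟨θ, hθ, rfl⟩
    have hθ' := Set.Ioo_subset_Icc_self hθ
    simpa using And.intro (hmono h0 hθ' hθ.1) (hmono hθ' h1 hθ.2)
  · simpa using intermediate_value_Ioo (by positivity : (0 : ℝ) ≤ π / 2)
      (continuous_const.mul continuous_sin : Continuous fun θ => R * sin θ).continuousOn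

lemma integral_Ioo_div_sqrt_sq_sub_sq (f : ℝ → ℝ) {R : ℝ} (hR : 0 < R) :
    ∫ y in Set.Ioo 0 R, f y / √(R ^ 2 - y ^ 2) = ∫ θ in Set.Ioo 0 (π / 2), f (R * sin θ) := by
  have hderiv : ∀ θ ∈ Set.Ioo 0 (π / 2),
      HasDerivWithinAt (fun θ => R * sin θ) (R * cos θ) (Set.Ioo 0 (π / 2)) θ :=
    fun θ _ => ((hasDerivAt_sin θ).const_mul R).hasDerivWithinAt
  have hinj : Set.InjOn (fun θ => R * sin θ) (Set.Ioo 0 (π / 2)) := fun a ha b hb hab =>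
    injOn_sin ⟨by linarith [ha.1, pi_pos], ha.2.le⟩ ⟨by linarith [hb.1, pi_pos], hb.2.le⟩
      (mul_left_cancel₀ hR.ne' hab)
  rw [← image_mul_sin_Ioo hR,
    integral_image_eq_integral_abs_deriv_smul measurableSet_Ioo hderiv hinj]
  refine setIntegral_congr_fun measurableSet_Ioo fun θ hθ => ?_
  have hcos : 0 < cos θ := cos_pos_of_mem_Ioo ⟨by linarith [hθ.1, pi_pos], hθ.2⟩
  have hsqrt : √(R ^ 2 - (R * sin θ) ^ 2) = R * cos θ := by
    rw [← sqrt_sq (by positivity : 0 ≤ R * cos θ)]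
    congr 1
    linear_combination -R ^ 2 * sin_sq_add_cos_sq θ
  rw [abs_of_pos (by positivity), smul_eq_mul, hsqrt]
  field_simp

lemma prod_range_odd_div_even (m : ℕ) :
    ∏ i ∈ Finset.range m, (2 * (i : ℝ) + 1) / (2 * i + 2) =
      Gamma (m + 1 / 2) / (√π * Gamma (m + 1)) := by
  induction m with
  | zero =>
    simp only [Finset.prod_range_zero, CharP.cast_eq_zero, zero_add, Gamma_one, mul_one,
      Gamma_one_half_eq, div_self (sqrt_pos.mpr pi_pos).ne']
  | succ m ih =>
    have hΓhalf : Gamma ((m + 1 : ℕ) + 1 / 2) = (m + 1 / 2) * Gamma (m + 1 / 2) := by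
      rw [← Gamma_add_one (by positivity)]; push_cast; ring_nf
    have hΓ : Gamma ((m + 1 : ℕ) + 1) = (m + 1) * Gamma (m + 1) := by
      rw [← Gamma_add_one (by positivity)]; push_cast; ring_nf
    have : Gamma (m + 1) ≠ 0 := (Gamma_pos_of_pos (by positivity)).ne'
    rw [Finset.prod_range_succ, ih, hΓhalf, hΓ]
    field_simp

lemma integral_sin_pow_even_Ioo_zero_pi_div_two (m : ℕ) :
    ∫ θ in Set.Ioo 0 (π / 2), sin θ ^ (2 * m) = √π * Gamma (m + 1 / 2) / (2 * Gamma (m + 1)) := by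
  have hcont : Continuous fun θ => sin θ ^ (2 * m) := continuous_sin.pow _
  have hsymm : ∫ θ in (π / 2)..π, sin θ ^ (2 * m) = ∫ θ in 0..(π / 2), sin θ ^ (2 * m) := by
    simpa [sin_pi_sub, show π - π / 2 = π / 2 by ring] using
      (intervalIntegral.integral_comp_sub_left (fun θ => sin θ ^ (2 * m)) π
        (a := 0) (b := π / 2)).symm
  have hsplit := intervalIntegral.integral_add_adjacent_intervals
    (hcont.intervalIntegrable (μ := volume) 0 (π / 2)) (hcont.intervalIntegrable (π / 2) π)
  rw [hsymm, integral_sin_pow_even, prod_range_odd_div_even] at hsplit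
  rw [← integral_Ioc_eq_integral_Ioo, ← intervalIntegral.integral_of_le (by positivity)]
  have : √π ≠ 0 := (sqrt_pos.mpr pi_pos).ne'
  have : Gamma (m + 1) ≠ 0 := (Gamma_pos_of_pos (by positivity)).ne'
  have hπ : π * (Gamma (m + 1 / 2) / (√π * Gamma (m + 1))) =
      2 * (√π * Gamma (m + 1 / 2) / (2 * Gamma (m + 1))) := by
    field_simp
    exact (sq_sqrt pi_pos.le).symm
  linarith

lemma volume_real_unitBall_euclideanSpace_fin_two_mul {n : ℕ} (hn : n ≠ 0) :
    volume.real (ball (0 : EuclideanSpace ℝ (Fin (2 * n))) 1) = π ^ n / Gamma (n + 1) := by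
  have : Nonempty (Fin (2 * n)) := ⟨⟨0, by omega⟩⟩
  rw [measureReal_def, EuclideanSpace.volume_ball, Fintype.card_fin, ENNReal.ofReal_one, one_pow,
    one_mul, ENNReal.toReal_ofReal (by positivity), pow_mul, sq_sqrt pi_pos.le]
  push_cast
  ring_nf

lemma hPer_uR {n : ℕ} (hn : n ≠ 0) {R : ℝ} (hR : 0 < R) :
    hPer n R (uR n R) = π ^ ((n : ℝ) + 1 / 2) * Gamma ((n : ℝ) + 1 / 2) /
      (2 * Gamma n * Gamma ((n : ℝ) + 1)) * R ^ (2 * (n : ℝ) + 1) := by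
  have : Nonempty (Fin (2 * n)) := ⟨⟨0, by omega⟩⟩
  have hradial : hPer n R (uR n R) =
      ∫ z in ball (0 : EuclideanSpace ℝ (Fin (2 * n))) R,
        (fun r => R * r / (2 * √(R ^ 2 - r ^ 2))) ‖z‖ := by
    refine setIntegral_congr_ae measurableSet_ball ?_
    filter_upwards [measure_eq_zero_iff_ae_notMem.mp (measure_singleton 0)] with z hz0 hz
    exact norm_gradient_uR_add_half_zperp n hz0 (mem_ball_zero_iff.mp hz)
  have hshell : ∫ y in Set.Ioo 0 R, y ^ (2 * n - 1) • (R * y / (2 * √(R ^ 2 - y ^ 2))) =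
      R / 2 * R ^ (2 * n) * (√π * Gamma (n + 1 / 2) / (2 * Gamma (n + 1))) := calc
    _ = R / 2 * ∫ y in Set.Ioo 0 R, y ^ (2 * n) / √(R ^ 2 - y ^ 2) := by
      rw [← integral_const_mul]
      refine setIntegral_congr_fun measurableSet_Ioo fun y _ => ?_
      rw [smul_eq_mul, ← pow_sub_one_mul (by omega : 2 * n ≠ 0) y]
      ring
    _ = R / 2 * (R ^ (2 * n) * ∫ θ in Set.Ioo 0 (π / 2), sin θ ^ (2 * n)) := by
      rw [integral_Ioo_div_sqrt_sq_sub_sq (· ^ (2 * n)) hR]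
      simp_rw [mul_pow, integral_const_mul]
    _ = _ := by rw [integral_sin_pow_even_Ioo_zero_pi_div_two]; ring
  rw [hradial, integral_ball_fun_norm_addHaar volume (fun r => R * r / (2 * √(R ^ 2 - r ^ 2))),
    finrank_euclideanSpace_fin, hshell, volume_real_unitBall_euclideanSpace_fin_two_mul hn]
  have hπ : π ^ ((n : ℝ) + 1 / 2) = π ^ n * √π := by
    rw [rpow_add pi_pos, rpow_natCast, ← sqrt_eq_rpow]
  have hRpow : R ^ (2 * (n : ℝ) + 1) = R ^ (2 * n) * R := by
    rw [← pow_succ, ← rpow_natCast]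
    push_cast
    ring_nf
  have hΓ : Gamma ((n : ℝ) + 1) = n * Gamma n := Gamma_add_one (by exact_mod_cast hn)
  have : Gamma n ≠ 0 := (Gamma_pos_of_pos (by positivity)).ne'
  rw [hπ, hRpow, hΓ, nsmul_eq_mul, smul_eq_mul]
  push_cast
  field_simp

theorem stmt_5 (n : ℕ) (hn : 1 ≤ n) (R : ℝ) (hR : 0 < R) (Q : ℝ) (hQ : Q = 2 * n + 2) :
    (∫ z in ball (0 : EuclideanSpace ℝ (Fin (2 * n))) R,
        ‖gradient (uR n R) z + (1 / 2 : ℝ) • zperp n z‖) =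
      π ^ ((n : ℝ) + 1 / 2) * Real.Gamma ((n : ℝ) + 1 / 2) /
        (2 * Real.Gamma n * Real.Gamma ((n : ℝ) + 1)) * R ^ (2 * (n : ℝ) + 1) ∧
    (∫ z in ball (0 : EuclideanSpace ℝ (Fin (2 * n))) R,
        ‖gradient (uR n R) z + (1 / 2 : ℝ) • zperp n z‖) =
      π ^ ((Q - 1) / 2) * Real.Gamma ((Q - 1) / 2) /
        (2 * Real.Gamma ((Q - 2) / 2) * Real.Gamma (Q / 2)) * R ^ (Q - 1) := by
  have h : hPer n R (uR n R) = _ := hPer_uR (Nat.one_le_iff_ne_zero.mp hn) hR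
  refine ⟨h, h.trans ?_⟩
  subst hQ
  rw [show (2 * (n : ℝ) + 2 - 1) / 2 = n + 1 / 2 by ring,
    show (2 * (n : ℝ) + 2 - 2) / 2 = n by ring, show (2 * (n : ℝ) + 2) / 2 = n + 1 by ring,
    show 2 * (n : ℝ) + 2 - 1 = 2 * n + 1 by ring]
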